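/- arXiv:1403.1673 — 8 statements merged into one kernel-verified Lean document; each statement's English description precedes it below -/
import Mathlib

section
/- Let k > 2 and m ≥ 2 be integers, and let d ≥ 1. For any d distinct primitive k-th roots of unity ζ₁,...,ζ_d, if d ≤ m - 1 then the real part of the product (m - ζ₁)⋯(m - ζ_d) is at least (1/2)(m-1)^d. -/
/-!
Write `zᵢ = m - ζᵢ`. Since `|ζᵢ| = 1`, each `zᵢ` has real part at least `m - 1` and imaginary
part at most `1` in absolute value, so `|arg zᵢ| ≤ |tan (arg zᵢ)| ≤ 1 / (m - 1)`. Hence the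
arguments add up to at most `d / (m - 1) ≤ 1` in absolute value, and
`Re ∏ zᵢ = (∏ |zᵢ|) cos (∑ arg zᵢ) ≥ (m - 1)ᵈ cos 1 ≥ (m - 1)ᵈ / 2`.
-/

open Complex Finset

theorem Real.abs_le_abs_tan {x : ℝ} (hx : |x| < Real.pi / 2) : |x| ≤ |Real.tan x| := by
  rcases le_total 0 x with h | h
  · rw [abs_of_nonneg h]
    exact (Real.le_tan h (lt_of_abs_lt hx)).trans (le_abs_self _)
  · rw [abs_of_nonpos h]
    calc -x ≤ Real.tan (-x) := Real.le_tan (by linarith) (by rwa [abs_of_nonpos h] at hx)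
      _ = -Real.tan x := Real.tan_neg x
      _ ≤ |Real.tan x| := neg_le_abs _

theorem Complex.abs_arg_le_abs_im_div_re {z : ℂ} (hz : 0 < z.re) :
    |arg z| ≤ |z.im| / z.re := by
  calc |arg z| ≤ |Real.tan (arg z)| :=
        Real.abs_le_abs_tan (abs_arg_lt_pi_div_two_iff.mpr (Or.inl hz))
    _ = |z.im| / z.re := by rw [tan_arg, abs_div, abs_of_pos hz]

theorem Complex.re_prod_eq_prod_norm_mul_cos_sum_arg {ι : Type*} (s : Finset ι) (z : ι → ℂ) :
    (∏ i ∈ s, z i).re = (∏ i ∈ s, ‖z i‖) * Real.cos (∑ i ∈ s, arg (z i)) := by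
  have hpolar : ∏ i ∈ s, z i =
      ((∏ i ∈ s, ‖z i‖ : ℝ) : ℂ) * exp ((∑ i ∈ s, arg (z i) : ℝ) * I) := by
    conv_lhs => rw [← prod_congr rfl fun i _ => norm_mul_exp_arg_mul_I (z i)]
    rw [prod_mul_distrib, ← exp_sum, ← sum_mul]
    push_cast
    rfl
  rw [hpolar, re_ofReal_mul, exp_ofReal_mul_I_re]

theorem Real.one_half_le_cos_of_abs_le_one {x : ℝ} (hx : |x| ≤ 1) : 1 / 2 ≤ Real.cos x := by
  have hx2 : x ^ 2 ≤ 1 := by nlinarith [sq_abs x, abs_nonneg x]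
  linarith [Real.one_sub_sq_div_two_le_cos (x := x)]

theorem Complex.half_mul_pow_card_le_re_prod {ι : Type*} (s : Finset ι) (z : ι → ℂ)
    {a b : ℝ}
    (ha : 0 < a) (hre : ∀ i ∈ s, a ≤ (z i).re) (him : ∀ i ∈ s, |(z i).im| ≤ b)
    (hcard : #s * b ≤ a) :
    1 / 2 * a ^ #s ≤ (∏ i ∈ s, z i).re := by
  have harg : ∀ i ∈ s, |arg (z i)| ≤ b / a := fun i hi =>
    calc |arg (z i)| ≤ |(z i).im| / (z i).re := abs_arg_le_abs_im_div_re (ha.trans_le (hre i hi))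
      _ ≤ b / a := div_le_div₀ ((abs_nonneg _).trans (him i hi)) (him i hi) ha (hre i hi)
  have hsum : |∑ i ∈ s, arg (z i)| ≤ 1 :=
    calc |∑ i ∈ s, arg (z i)| ≤ ∑ i ∈ s, |arg (z i)| := abs_sum_le_sum_abs _ _
      _ ≤ #s * (b / a) := by simpa using sum_le_sum harg
      _ ≤ 1 := by rwa [← mul_div_assoc, div_le_one ha]
  have hnorm : a ^ #s ≤ ∏ i ∈ s, ‖z i‖ :=
    calc a ^ #s = ∏ _i ∈ s, a := (prod_const a).symm
      _ ≤ ∏ i ∈ s, ‖z i‖ :=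
        prod_le_prod (fun _ _ => ha.le) fun i hi => (hre i hi).trans (re_le_norm _)
  rw [re_prod_eq_prod_norm_mul_cos_sum_arg, mul_comm]
  exact mul_le_mul hnorm (Real.one_half_le_cos_of_abs_le_one hsum) (by norm_num)
    ((pow_pos ha _).le.trans hnorm)

theorem re_prod_sub_primitive_roots_ge_general (k m d : ℕ) (hk : 2 < k) (hm : 2 ≤ m)
    (hdm : d ≤ m - 1) (ζ : Fin d → ℂ)
    (hprim : ∀ i, IsPrimitiveRoot (ζ i) k) :
    (1 / 2 : ℝ) * ((m : ℝ) - 1) ^ d ≤ (∏ i, ((m : ℂ) - ζ i)).re := by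
  have hnorm (i : Fin d) : ‖ζ i‖ = 1 :=
    norm_eq_one_of_pow_eq_one (hprim i).pow_eq_one (by omega)
  have hm1 : (1 : ℝ) ≤ (m : ℝ) - 1 := by
    have : (2 : ℝ) ≤ m := by exact_mod_cast hm
    linarith
  have hd : (d : ℝ) ≤ (m : ℝ) - 1 := by
    have : (d : ℝ) ≤ ((m - 1 : ℕ) : ℝ) := by exact_mod_cast hdm
    rwa [Nat.cast_sub (by omega), Nat.cast_one] at this
  simpa using half_mul_pow_card_le_re_prod univ (fun i => (m : ℂ) - ζ i) (b := 1)
    (by linarith)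
    (fun i _ => by
      simp only [sub_re, natCast_re]
      linarith [(re_le_norm (ζ i)).trans (hnorm i).le])
    (fun i _ => by simpa [abs_neg] using (abs_im_le_norm (ζ i)).trans (hnorm i).le)
    (by simpa using hd)

/-- If `ζ₁, …, ζ_d` are pairwise distinct primitive `k`-th roots of unity (`k > 2`),
`m ≥ 2` and `1 ≤ d ≤ m - 1`, then `Re((m - ζ₁)⋯(m - ζ_d)) ≥ (1/2)(m-1)^d`. -/
theorem re_prod_sub_primitive_roots_ge (k m d : ℕ) (hk : 2 < k) (hm : 2 ≤ m)
    (hd : 1 ≤ d) (hdm : d ≤ m - 1) (ζ : Fin d → ℂ)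
    (hinj : Function.Injective ζ) (hprim : ∀ i, IsPrimitiveRoot (ζ i) k) :
    (1 / 2 : ℝ) * ((m : ℝ) - 1) ^ d ≤ (∏ i, ((m : ℂ) - ζ i)).re :=
  re_prod_sub_primitive_roots_ge_general k m d hk hm hdm ζ hprim
end

section
/- Let k > 2 and m ≥ φ(k) + 1 be integers, and write Φ_k(m + X) = Σ_{d=0}^{φ(k)} p_d X^d, where Φ_k is the k-th cyclotomic polynomial and φ is Euler's totient. Then for each 1 ≤ d ≤ φ(k), the coefficient p_{φ(k)-d} is a real number satisfying (1/2)(m-1)^d · C(φ(k), d) ≤ p_{φ(k)-d} ≤ (m+1)^d · C(φ(k), d), where C(n,d) denotes the binomial coefficient. -/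
/-!
Over `ℂ`, `Φ_k(m + X) = ∏ (X + (m - μ))` over the primitive `k`-th roots of unity `μ`, so
`p_{φ(k)-d}` is the sum, over the `C(φ(k), d)` subsets of `d` roots, of `∏ (m - μ)`.
Each factor has modulus in `[m - 1, m + 1]`, which gives the upper bound, and argument at most
`1 / (m - 1)` in absolute value. As `d ≤ m - 1`, the arguments of the `d` factors add up to at
most `1` in absolute value, and `cos 1 ≥ 1 / 2` turns the lower bound on the modulus of the product
into one on its real part.
-/

open Polynomial Real Finset

lemma Real.abs_le_abs_tan_s2 {x : ℝ} (hx : |x| < π / 2) : |x| ≤ |tan x| := by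
  rcases le_total 0 x with h | h
  · rw [abs_of_nonneg h] at hx ⊢
    exact (le_tan h hx).trans (le_abs_self _)
  · rw [abs_of_nonpos h] at hx ⊢
    have := le_tan (neg_nonneg.2 h) hx
    rw [tan_neg] at this
    exact this.trans (neg_le_abs _)

namespace Complex

lemma abs_arg_le_abs_im_div_re_s2 {z : ℂ} (hz : 0 < z.re) : |arg z| ≤ |z.im| / z.re :=
  calc |arg z| ≤ |Real.tan (arg z)| := abs_le_abs_tan_s2 (abs_arg_lt_pi_div_two_iff.2 (.inl hz))
    _ = |z.im| / z.re := by rw [tan_arg, abs_div, abs_of_pos hz]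

lemma re_prod_eq_prod_norm_mul_cos_sum_arg_s2 {ι : Type*} (s : Finset ι) (f : ι → ℂ) :
    (∏ i ∈ s, f i).re = (∏ i ∈ s, ‖f i‖) * Real.cos (∑ i ∈ s, arg (f i)) := by
  conv_lhs => rw [← prod_congr rfl fun i _ => norm_mul_exp_arg_mul_I (f i)]
  rw [prod_mul_distrib, ← exp_sum, ← sum_mul, ← ofReal_prod, ← ofReal_sum, re_ofReal_mul,
    exp_ofReal_mul_I_re]

lemma half_mul_pow_card_le_re_prod_s2 {ι : Type*} {s : Finset ι} {f : ι → ℂ} {R : ℝ}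
    (hcard : (#s : ℝ) ≤ R) (hre : ∀ i ∈ s, R ≤ (f i).re) (him : ∀ i ∈ s, |(f i).im| ≤ 1) :
    1 / 2 * R ^ #s ≤ (∏ i ∈ s, f i).re := by
  rcases s.eq_empty_or_nonempty with rfl | hs
  · norm_num
  have hR : 0 < R := by
    have : (1 : ℝ) ≤ #s := by exact_mod_cast hs.card_pos
    linarith
  have hnorm : R ^ #s ≤ ∏ i ∈ s, ‖f i‖ := by
    rw [← prod_const]
    exact prod_le_prod (fun _ _ => hR.le) fun i hi => (hre i hi).trans (re_le_norm _)
  have harg : |∑ i ∈ s, arg (f i)| ≤ 1 :=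
    calc |∑ i ∈ s, arg (f i)| ≤ ∑ i ∈ s, |arg (f i)| := abs_sum_le_sum_abs _ _
      _ ≤ ∑ _i ∈ s, 1 / R := sum_le_sum fun i hi => by
          have hpos : 0 < (f i).re := hR.trans_le (hre i hi)
          calc |arg (f i)| ≤ |(f i).im| / (f i).re := abs_arg_le_abs_im_div_re_s2 hpos
            _ ≤ 1 / R := div_le_div₀ zero_le_one (him i hi) hR (hre i hi)
      _ = #s / R := by rw [sum_const, nsmul_eq_mul, mul_one_div]
      _ ≤ 1 := (div_le_one hR).2 hcard
  have hcos : 1 / 2 ≤ Real.cos (∑ i ∈ s, arg (f i)) := by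
    have := one_sub_sq_div_two_le_cos (x := ∑ i ∈ s, arg (f i))
    nlinarith [sq_abs (∑ i ∈ s, arg (f i)), abs_nonneg (∑ i ∈ s, arg (f i))]
  rw [re_prod_eq_prod_norm_mul_cos_sum_arg_s2, mul_comm (∏ i ∈ s, ‖f i‖)]
  exact mul_le_mul hcos hnorm (by positivity) (by linarith)

lemma re_prod_le_pow_card {ι : Type*} {s : Finset ι} {f : ι → ℂ} {R : ℝ}
    (h : ∀ i ∈ s, ‖f i‖ ≤ R) : (∏ i ∈ s, f i).re ≤ R ^ #s :=
  calc (∏ i ∈ s, f i).re ≤ ∏ i ∈ s, ‖f i‖ := (re_le_norm _).trans (norm_prod _ _).le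
    _ ≤ R ^ #s := by
      rw [← prod_const]
      exact prod_le_prod (fun _ _ => norm_nonneg _) h

lemma re_prod_ofReal_sub_mem_Icc {s : Finset ℂ} {a : ℝ} (hs : ∀ μ ∈ s, ‖μ‖ ≤ 1)
    (hcard : (#s : ℝ) ≤ a - 1) :
    (∏ μ ∈ s, ((a : ℂ) - μ)).re ∈ Set.Icc (1 / 2 * (a - 1) ^ #s) ((a + 1) ^ #s) := by
  refine ⟨half_mul_pow_card_le_re_prod_s2 hcard (fun μ hμ => ?_) (fun μ hμ => ?_),
    re_prod_le_pow_card fun μ hμ => ?_⟩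
  · simp only [sub_re, ofReal_re]
    linarith [re_le_norm μ, hs μ hμ]
  · simpa using (abs_im_le_norm μ).trans (hs μ hμ)
  · calc ‖(a : ℂ) - μ‖ ≤ ‖(a : ℂ)‖ + ‖μ‖ := norm_sub_le _ _
      _ ≤ a + 1 := by
        rw [norm_real, Real.norm_of_nonneg (by linarith [(#s).cast_nonneg (α := ℝ)])]
        linarith [hs μ hμ]

end Complex

lemma Polynomial.cyclotomic_comp_X_add_C_coeff {k : ℕ} (hk : k ≠ 0) (a : ℤ) {d : ℕ}
    (hd : d ≤ Nat.totient k) :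
    ((((cyclotomic k ℤ).comp (X + C a)).coeff (Nat.totient k - d) : ℤ) : ℂ) =
      ∑ t ∈ (primitiveRoots k ℂ).powersetCard d, ∏ μ ∈ t, ((a : ℂ) - μ) := by
  have hmap : ((cyclotomic k ℤ).comp (X + C a)).map (Int.castRingHom ℂ) =
      ∏ μ ∈ primitiveRoots k ℂ, (X + C ((a : ℂ) - μ)) := by
    rw [Polynomial.map_comp, map_cyclotomic,
      cyclotomic_eq_prod_X_sub_primitiveRoots (Complex.isPrimitiveRoot_exp k hk), prod_comp]
    refine prod_congr rfl fun μ _ => ?_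
    simp only [Polynomial.map_add, map_X, eq_intCast, Polynomial.map_intCast, sub_comp, X_comp,
      C_comp, C_sub, C_eq_intCast]
    ring
  have hcard := Complex.card_primitiveRoots k
  rw [← eq_intCast (Int.castRingHom ℂ), ← coeff_map, hmap,
    prod_X_add_C_coeff _ _ (by omega), hcard, Nat.sub_sub_self hd]

theorem cyclotomic_shift_coeff_bounds_general (k m : ℕ) (hk : 2 < k)
    (hm : Nat.totient k + 1 ≤ m) (d : ℕ) (hd2 : d ≤ Nat.totient k) :
    (1 / 2 : ℝ) * ((m : ℝ) - 1) ^ d * (Nat.choose (Nat.totient k) d) ≤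
        (((cyclotomic k ℤ).comp (X + C (m : ℤ))).coeff (Nat.totient k - d) : ℝ) ∧
      (((cyclotomic k ℤ).comp (X + C (m : ℤ))).coeff (Nat.totient k - d) : ℝ) ≤
        ((m : ℝ) + 1) ^ d * (Nat.choose (Nat.totient k) d) := by
  have hk0 : k ≠ 0 := by omega
  have hdm : (d : ℝ) ≤ m - 1 := by
    have : (d : ℝ) + 1 ≤ m := by exact_mod_cast (by omega : d + 1 ≤ m)
    linarith
  have hcoeff := congrArg Complex.re (cyclotomic_comp_X_add_C_coeff hk0 m hd2)
  rw [Complex.intCast_re, Complex.re_sum, Int.cast_natCast] at hcoeff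
  have hterm : ∀ t ∈ (primitiveRoots k ℂ).powersetCard d,
      (∏ μ ∈ t, ((m : ℂ) - μ)).re ∈ Set.Icc (1 / 2 * ((m : ℝ) - 1) ^ d) (((m : ℝ) + 1) ^ d) := by
    intro t ht
    obtain ⟨hts, rfl⟩ := mem_powersetCard.1 ht
    have hunit : ∀ μ ∈ t, ‖μ‖ ≤ 1 := fun μ hμ =>
      ((mem_primitiveRoots (Nat.pos_of_ne_zero hk0)).1 (hts hμ)).norm'_eq_one hk0 |>.le
    simpa using Complex.re_prod_ofReal_sub_mem_Icc hunit hdm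
  have hcard : #((primitiveRoots k ℂ).powersetCard d) = (Nat.totient k).choose d := by
    rw [card_powersetCard, Complex.card_primitiveRoots]
  have hlower := card_nsmul_le_sum _ _ _ fun t ht => (hterm t ht).1
  have hupper := sum_le_card_nsmul _ _ _ fun t ht => (hterm t ht).2
  rw [hcard, nsmul_eq_mul] at hlower hupper
  rw [hcoeff]
  constructor <;> linarith

/-- Bounds on the coefficients of `Φ_k(m + X)`: for `1 ≤ d ≤ φ(k)` one has
`(1/2)(m-1)^d C(φ(k),d) ≤ p_{φ(k)-d} ≤ (m+1)^d C(φ(k),d)`. -/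
theorem cyclotomic_shift_coeff_bounds (k m : ℕ) (hk : 2 < k)
    (hm : Nat.totient k + 1 ≤ m) (d : ℕ) (hd1 : 1 ≤ d) (hd2 : d ≤ Nat.totient k) :
    (1 / 2 : ℝ) * ((m : ℝ) - 1) ^ d * (Nat.choose (Nat.totient k) d) ≤
        (((cyclotomic k ℤ).comp (X + C (m : ℤ))).coeff (Nat.totient k - d) : ℝ) ∧
      (((cyclotomic k ℤ).comp (X + C (m : ℤ))).coeff (Nat.totient k - d) : ℝ) ≤
        ((m : ℝ) + 1) ^ d * (Nat.choose (Nat.totient k) d) :=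
  cyclotomic_shift_coeff_bounds_general k m hk hm d hd2
end

section
/- Let k > 2 and m ≥ φ(k) + 1 be integers, and write Φ_k(m+X) = Σ_{d=0}^{φ(k)} p_d X^d. Then the constant term satisfies p_0 = Φ_k(m) ≥ (1/2)(m-1)^{φ(k)} ≥ 2. -/
/-!
Since `Φ_k(m + X)` evaluated at `0` is `Φ_k(m)`, everything reduces to the bound
`(m - 1)^{φ(k)} < Φ_k(m)`. For `k > 2` the totient is even, hence at least `2`, and `m - 1 ≥ 2`,
so `(m - 1)^{φ(k)} ≥ 4`.
-/

open Polynomial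

theorem Polynomial.coeff_zero_comp_X_add_C {R : Type*} [CommSemiring R] (p : R[X]) (a : R) :
    (p.comp (X + C a)).coeff 0 = p.eval a := by
  rw [coeff_zero_eq_eval_zero, eval_comp, eval_add, eval_X, eval_C, zero_add]

theorem Polynomial.intCast_eval_cyclotomic {R : Type*} [Ring R] (k : ℕ) (i : ℤ) :
    (((cyclotomic k ℤ).eval i : ℤ) : R) = (cyclotomic k R).eval (i : R) := by
  rw [← map_cyclotomic_int k R, eval_intCast_map, eq_intCast, Int.cast_id]

theorem Nat.two_le_totient_of_two_lt {k : ℕ} (hk : 2 < k) : 2 ≤ k.totient := by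
  obtain ⟨r, hr⟩ := Nat.totient_even hk
  have hpos : 0 < k.totient := Nat.totient_pos.mpr (by omega)
  omega

theorem two_le_half_mul_sub_one_pow {q : ℝ} {n : ℕ} (hq : 3 ≤ q) (hn : 2 ≤ n) :
    2 ≤ 1 / 2 * (q - 1) ^ n := by
  have h4 : (4 : ℝ) ≤ (q - 1) ^ n :=
    calc (4 : ℝ) = 2 ^ 2 := by norm_num
      _ ≤ 2 ^ n := pow_le_pow_right₀ (by norm_num) hn
      _ ≤ (q - 1) ^ n := pow_le_pow_left₀ (by norm_num) (by linarith) n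
  linarith

/-- The constant term of `Φ_k(m + X)` equals `Φ_k(m)` and satisfies
`p₀ ≥ (1/2)(m-1)^{φ(k)} ≥ 2` when `k > 2` and `m ≥ φ(k) + 1`. -/
theorem cyclotomic_shift_constant_term (k m : ℕ) (hk : 2 < k)
    (hm : Nat.totient k + 1 ≤ m) :
    ((cyclotomic k ℤ).comp (X + C (m : ℤ))).coeff 0 = (cyclotomic k ℤ).eval (m : ℤ) ∧
      (1 / 2 : ℝ) * ((m : ℝ) - 1) ^ Nat.totient k ≤
        (((cyclotomic k ℤ).comp (X + C (m : ℤ))).coeff 0 : ℝ) ∧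
      (2 : ℝ) ≤ (1 / 2 : ℝ) * ((m : ℝ) - 1) ^ Nat.totient k := by
  have htotient := Nat.two_le_totient_of_two_lt hk
  have hm3 : (3 : ℝ) ≤ m := by exact_mod_cast (by omega : 3 ≤ m)
  have hcoeff := coeff_zero_comp_X_add_C (cyclotomic k ℤ) (m : ℤ)
  refine ⟨hcoeff, ?_, two_le_half_mul_sub_one_pow hm3 htotient⟩
  rw [hcoeff, intCast_eval_cyclotomic, Int.cast_natCast]
  have hlt := sub_one_pow_totient_lt_cyclotomic_eval (by omega : 2 ≤ k) (by linarith : (1 : ℝ) < m)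
  have hnonneg := pow_nonneg (by linarith : (0 : ℝ) ≤ m - 1) k.totient
  linarith
end

section
/- Let k > 2 and m ≥ φ(k) + 1 be integers. Then Σ_{a ∈ (ℤ/kℤ)^×} 1/(m - ζ^a) is a real number at most 1, where ζ is a primitive k-th root of unity. Equivalently, writing Φ_k(m+X) = Σ p_d X^d, the coefficients satisfy p_1 ≤ p_0. -/
/-!
By logarithmic differentiation of `Φ_k = ∏ (X - ζ)`, the sum `S = Σ 1/(m - ζ)` equals
`Φ_k'(m)/Φ_k(m) = p₁/p₀`, a quotient of integers, so it is real. Each term has norm at most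
`1/(m - 1)` because `|ζ| = 1`, so `|S| ≤ φ(k)/(m - 1) ≤ 1`; since `p₀ = Φ_k(m) > 0` this gives
`p₁ ≤ p₀`.
-/

open Polynomial Finset

theorem norm_sum_one_div_sub_le {𝕜 : Type*} [NormedField 𝕜] {s : Finset 𝕜}
    (hs : ∀ ζ ∈ s, ‖ζ‖ = 1) {x : 𝕜} (hx : 1 < ‖x‖) :
    ‖∑ ζ ∈ s, 1 / (x - ζ)‖ ≤ #s / (‖x‖ - 1) := by
  have hterm : ∀ ζ ∈ s, ‖1 / (x - ζ)‖ ≤ 1 / (‖x‖ - 1) := by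
    intro ζ hζ
    rw [norm_div, norm_one]
    exact one_div_le_one_div_of_le (by linarith) (by simpa [hs ζ hζ] using norm_sub_norm_le x ζ)
  calc ‖∑ ζ ∈ s, 1 / (x - ζ)‖ ≤ ∑ _ζ ∈ s, 1 / (‖x‖ - 1) := norm_sum_le_of_le s hterm
    _ = #s / (‖x‖ - 1) := by rw [sum_const, nsmul_eq_mul, mul_one_div]

theorem norm_sum_one_div_natCast_sub_primitiveRoots_le_one {k m : ℕ} (hk : k ≠ 0)
    (hm : k.totient + 1 ≤ m) :
    ‖∑ ζ ∈ primitiveRoots k ℂ, 1 / ((m : ℂ) - ζ)‖ ≤ 1 := by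
  have hroots : ∀ ζ ∈ primitiveRoots k ℂ, ‖ζ‖ = 1 := fun ζ hζ =>
    ((mem_primitiveRoots (Nat.pos_of_ne_zero hk)).1 hζ).norm'_eq_one hk
  have hm' : (k.totient : ℝ) + 1 ≤ m := by exact_mod_cast hm
  have hφ : (1 : ℝ) ≤ k.totient := by exact_mod_cast Nat.totient_pos.2 (Nat.pos_of_ne_zero hk)
  refine (norm_sum_one_div_sub_le hroots (by rw [Complex.norm_natCast]; linarith)).trans ?_
  rw [Complex.norm_natCast, Complex.card_primitiveRoots, div_le_one (by linarith)]
  linarith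

theorem eval_derivative_cyclotomic_eq_mul_sum {K : Type*} [Field K] [IsAlgClosed K] {n : ℕ}
    [NeZero (n : K)] {x : K} (hx : (cyclotomic n K).eval x ≠ 0) :
    (derivative (cyclotomic n K)).eval x =
      (cyclotomic n K).eval x * ∑ ζ ∈ primitiveRoots n K, 1 / (x - ζ) := by
  rw [(IsAlgClosed.splits _).eval_derivative_eq_eval_mul_sum hx,
    cyclotomic.roots_eq_primitiveRoots_val]
  rfl

theorem cast_eval_derivative_cyclotomic_eq_mul_sum {n : ℕ} [NeZero n] {x : ℕ}
    (hx : (cyclotomic n ℤ).eval (x : ℤ) ≠ 0) :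
    (((derivative (cyclotomic n ℤ)).eval (x : ℤ) : ℤ) : ℂ) =
      (cyclotomic n ℤ).eval (x : ℤ) * ∑ ζ ∈ primitiveRoots n ℂ, 1 / ((x : ℂ) - ζ) := by
  have hcast (p : ℤ[X]) :
      ((p.eval (x : ℤ) : ℤ) : ℂ) = (p.map (Int.castRingHom ℂ)).eval (x : ℂ) := by
    simp
  rw [hcast, hcast, ← derivative_map, map_cyclotomic]
  refine eval_derivative_cyclotomic_eq_mul_sum ?_
  rwa [← map_cyclotomic _ (Int.castRingHom ℂ), ← hcast, Int.cast_ne_zero]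

/-- For `k > 2` and `m ≥ φ(k) + 1`, the sum `Σ_a 1/(m - ζ^a)` over primitive `k`-th
roots of unity is a real number at most `1`; equivalently, writing
`Φ_k(m+X) = Σ p_d X^d`, the coefficients satisfy `p₁ ≤ p₀`. -/
theorem sum_inv_sub_primitive_roots_le_one (k m : ℕ) (hk : 2 < k)
    (hm : Nat.totient k + 1 ≤ m) :
    (∑ ζ ∈ primitiveRoots k ℂ, 1 / ((m : ℂ) - ζ)).im = 0 ∧
      (∑ ζ ∈ primitiveRoots k ℂ, 1 / ((m : ℂ) - ζ)).re ≤ 1 ∧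
      ((cyclotomic k ℤ).comp (X + C (m : ℤ))).coeff 1 ≤
        ((cyclotomic k ℤ).comp (X + C (m : ℤ))).coeff 0 := by
  have : NeZero k := ⟨by omega⟩
  rw [← taylor_apply, taylor_coeff_one, taylor_coeff_zero]
  set S := ∑ ζ ∈ primitiveRoots k ℂ, 1 / ((m : ℂ) - ζ)
  set p₀ := (cyclotomic k ℤ).eval (m : ℤ)
  set p₁ := (derivative (cyclotomic k ℤ)).eval (m : ℤ)
  have hp₀ : 0 < p₀ := cyclotomic_pos hk _
  have hS : S = ((p₁ / p₀ : ℝ) : ℂ) := by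
    push_cast
    rw [cast_eval_derivative_cyclotomic_eq_mul_sum hp₀.ne',
      mul_div_cancel_left₀ _ (by exact_mod_cast hp₀.ne')]
  have hSre : S.re ≤ 1 :=
    (Complex.re_le_norm S).trans (norm_sum_one_div_natCast_sub_primitiveRoots_le_one (by omega) hm)
  refine ⟨by rw [hS]; exact Complex.ofReal_im _, hSre, ?_⟩
  rw [hS, Complex.ofReal_re, div_le_one (by exact_mod_cast hp₀)] at hSre
  exact_mod_cast hSre
end

section
/- Let k > 2 and m ≥ φ(k) + 1 be integers, and write Φ_k(m+X) = Σ_{d=0}^{φ(k)} p_d X^d. Then the coefficients satisfy 0 < p_{φ(k)-1} ≤ p_{φ(k)-2} ≤ ⋯ ≤ p_1 ≤ p_0 and p_0 ≥ 2. -/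
/-!
Over `ℂ`, `Φ_k(a + X) = ∏ (X + (a - ζ))` over the primitive `k`-th roots `ζ`. Pairing `ζ` with
`conj ζ` makes this a product of real factors `X + u` and `(X + u) ^ 2 + v ^ 2` with
`u = a - Re ζ ≥ a - 1 =: N`. Multiplication by such factors preserves the coefficient inequalities
`(d + 1) N h_{d+1} ≤ (ν - d) h_d` (which `(X + N) ^ ν` satisfies with equality). When `ν ≤ N` they
force `h_{d+1} ≤ h_d` for `d < ν`, and at `d = ν - 1` they give `p_{ν-1} ≥ ν N` for the monic
`Φ_k(a + X)`.
-/

open Polynomial ComplexConjugate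

structure CoeffRatioBound (N : ℝ) (ν : ℕ) (h : ℝ[X]) : Prop where
  coeff_nonneg : ∀ d, 0 ≤ h.coeff d
  ratio_le : ∀ d : ℕ, (d + 1) * N * h.coeff (d + 1) ≤ (ν - d) * h.coeff d

namespace CoeffRatioBound

variable {N : ℝ} {ν : ℕ} {h g : ℝ[X]}

theorem one (N : ℝ) : CoeffRatioBound N 0 1 where
  coeff_nonneg d := by rw [coeff_one]; split_ifs <;> norm_num
  ratio_le d := by rcases d with _ | d <;> simp [coeff_one]

theorem add (hh : CoeffRatioBound N ν h) (hg : CoeffRatioBound N ν g) :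
    CoeffRatioBound N ν (h + g) where
  coeff_nonneg d := by rw [coeff_add]; exact add_nonneg (hh.coeff_nonneg d) (hg.coeff_nonneg d)
  ratio_le d := by
    simp only [coeff_add]
    linarith [hh.ratio_le d, hg.ratio_le d]

theorem C_mul (hh : CoeffRatioBound N ν h) {ε : ℝ} (hε : 0 ≤ ε) :
    CoeffRatioBound N ν (C ε * h) where
  coeff_nonneg d := by rw [coeff_C_mul]; exact mul_nonneg hε (hh.coeff_nonneg d)
  ratio_le d := by
    simp only [coeff_C_mul]
    nlinarith [hh.ratio_le d]

theorem mono (hh : CoeffRatioBound N ν h) {ν' : ℕ} (hν : ν ≤ ν') : CoeffRatioBound N ν' h where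
  coeff_nonneg := hh.coeff_nonneg
  ratio_le d := by
    have : (ν : ℝ) ≤ ν' := by exact_mod_cast hν
    nlinarith [hh.ratio_le d, hh.coeff_nonneg d]

theorem mul_X_add_C (hh : CoeffRatioBound N ν h) (hN : 0 ≤ N) {u : ℝ} (hu : N ≤ u) :
    CoeffRatioBound N (ν + 1) (h * (X + C u)) := by
  have coeff_zero : (h * (X + C u)).coeff 0 = u * h.coeff 0 := by simp [mul_add, mul_comm]
  have coeff_succ (d : ℕ) : (h * (X + C u)).coeff (d + 1) = h.coeff d + u * h.coeff (d + 1) := by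
    simp [mul_add, coeff_mul_X, mul_comm]
  have hu0 : 0 ≤ u := hN.trans hu
  refine ⟨fun d => ?_, fun d => ?_⟩
  · rcases d with _ | d
    · rw [coeff_zero]; exact mul_nonneg hu0 (hh.coeff_nonneg 0)
    · rw [coeff_succ]; exact add_nonneg (hh.coeff_nonneg d) (mul_nonneg hu0 (hh.coeff_nonneg _))
  · have hratio := mul_le_mul_of_nonneg_left (hh.ratio_le d) hu0
    rcases d with _ | d
    · rw [coeff_succ, coeff_zero]
      push_cast at hratio ⊢
      linarith [mul_le_mul_of_nonneg_right hu (hh.coeff_nonneg 0)]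
    · rw [coeff_succ, coeff_succ]
      push_cast at hratio ⊢
      linarith [hh.ratio_le d, mul_le_mul_of_nonneg_right hu (hh.coeff_nonneg (d + 1))]

theorem mul_coeff_le_coeff_sub_one (hh : CoeffRatioBound N ν h) (hν : ν ≠ 0) :
    ν * N * h.coeff ν ≤ h.coeff (ν - 1) := by
  obtain ⟨d, rfl⟩ := Nat.exists_eq_succ_of_ne_zero hν
  simpa using hh.ratio_le d

theorem antitoneOn (hh : CoeffRatioBound N ν h) (hν : ν ≤ N) : AntitoneOn h.coeff (Set.Iic ν) := by
  refine antitoneOn_of_succ_le Set.ordConnected_Iic fun d _ _ hd => ?_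
  simp only [Set.mem_Iic, Order.succ_eq_add_one] at hd ⊢
  have hd' : (d : ℝ) + 1 ≤ ν := by exact_mod_cast hd
  have hνd : ((ν : ℝ) - d) * h.coeff (d + 1) ≤ (d + 1) * N * h.coeff (d + 1) :=
    mul_le_mul_of_nonneg_right (by nlinarith) (hh.coeff_nonneg _)
  exact le_of_mul_le_mul_left (hνd.trans (hh.ratio_le d)) (by linarith)

theorem mul_sq_X_add_C_add_C (hh : CoeffRatioBound N ν h) (hN : 0 ≤ N) {u v : ℝ} (hu : N ≤ u)
    (hv : 0 ≤ v) : CoeffRatioBound N (ν + 2) (h * ((X + C u) ^ 2 + C v)) := by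
  rw [show h * ((X + C u) ^ 2 + C v) = h * (X + C u) * (X + C u) + C v * h by ring]
  exact ((hh.mul_X_add_C hN hu).mul_X_add_C hN hu).add ((hh.C_mul hv).mono (by omega))

end CoeffRatioBound

theorem X_add_C_mul_X_add_C_conj (w : ℂ) :
    (X + C w) * (X + C (conj w)) = ((X + C w.re) ^ 2 + C (w.im ^ 2)).map (algebraMap ℝ ℂ) := by
  have hsum : C w + C (conj w) = 2 * C (w.re : ℂ) := by
    rw [← C_add, Complex.add_conj, ← C_ofNat, ← C_mul]; push_cast; rfl
  have hprod : C w * C (conj w) = C (w.re : ℂ) ^ 2 + C ((w.im : ℂ) ^ 2) := by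
    rw [← C_mul, Complex.mul_conj, Complex.normSq_apply, ← C_pow, ← C_add]; push_cast; ring_nf
  simp only [Polynomial.map_add, Polynomial.map_pow, map_X, map_C, Complex.coe_algebraMap]
  push_cast
  linear_combination X * hsum + hprod

theorem conj_mem_erase_conj {s t : Finset ℂ} (h : ∀ z ∈ s, conj z ∈ t) (a : ℂ) :
    ∀ z ∈ s.erase a, conj z ∈ t.erase (conj a) := by
  intro z hz
  rw [Finset.mem_erase] at hz ⊢
  exact ⟨fun hza => hz.1 (star_injective hza), h z hz.2⟩

theorem exists_map_eq_prod_X_add_C {N : ℝ} (hN : 0 ≤ N) (s : Finset ℂ)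
    (hconj : ∀ w ∈ s, conj w ∈ s) (hre : ∀ w ∈ s, N ≤ w.re) :
    ∃ r : ℝ[X], r.map (algebraMap ℝ ℂ) = ∏ w ∈ s, (X + C w) ∧ CoeffRatioBound N s.card r := by
  induction s using Finset.strongInduction with
  | H s ih =>
  rcases s.eq_empty_or_nonempty with rfl | ⟨w, hw⟩
  · exact ⟨1, by simp, CoeffRatioBound.one N⟩
  by_cases hreal : conj w = w
  · obtain ⟨r, hr, hbound⟩ := ih (s.erase w) (Finset.erase_ssubset hw)
      (by simpa [hreal] using conj_mem_erase_conj hconj w)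
      (fun z hz => hre z (Finset.mem_of_mem_erase hz))
    refine ⟨r * (X + C w.re), ?_, ?_⟩
    · rw [← Finset.mul_prod_erase s _ hw, Polynomial.map_mul, hr, mul_comm]
      simp [Complex.conj_eq_iff_re.mp hreal]
    · rw [← Finset.card_erase_add_one hw]
      exact hbound.mul_X_add_C hN (hre w hw)
  · have hw' : conj w ∈ s.erase w := Finset.mem_erase.mpr ⟨hreal, hconj w hw⟩
    set t := (s.erase w).erase (conj w)
    obtain ⟨r, hr, hbound⟩ := ih t ((Finset.erase_ssubset hw').trans (Finset.erase_ssubset hw))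
      (by simpa [t, Finset.erase_right_comm] using
        conj_mem_erase_conj (conj_mem_erase_conj hconj w) (conj w))
      (fun z hz => hre z (Finset.mem_of_mem_erase (Finset.mem_of_mem_erase hz)))
    refine ⟨r * ((X + C w.re) ^ 2 + C (w.im ^ 2)), ?_, ?_⟩
    · rw [← Finset.mul_prod_erase s _ hw, ← Finset.mul_prod_erase _ _ hw', Polynomial.map_mul, hr,
        ← X_add_C_mul_X_add_C_conj]
      ring
    · rw [← Finset.card_erase_add_one hw, ← Finset.card_erase_add_one hw']
      exact hbound.mul_sq_X_add_C_add_C hN (hre w hw) (sq_nonneg _)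

theorem coeffRatioBound_cyclotomic_comp_X_add_C {k : ℕ} (hk : k ≠ 0) {a : ℝ} (ha : 1 ≤ a) :
    CoeffRatioBound (a - 1) k.totient ((cyclotomic k ℝ).comp (X + C a)) := by
  have hprim := Complex.isPrimitiveRoot_exp k hk
  have hroot {z : ℂ} (hz : z ∈ primitiveRoots k ℂ) : IsPrimitiveRoot z k :=
    (mem_primitiveRoots (Nat.pos_of_ne_zero hk)).mp hz
  set s := (primitiveRoots k ℂ).image fun z => (a : ℂ) - z
  have hconj : ∀ w ∈ s, conj w ∈ s := by
    simp only [s, Finset.mem_image, forall_exists_index, and_imp, forall_apply_eq_imp_iff₂]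
    refine fun z hz => ⟨conj z, ?_, by simp⟩
    exact (mem_primitiveRoots (Nat.pos_of_ne_zero hk)).mpr
      ((hroot hz).map_of_injective (starRingEnd ℂ).injective)
  have hre : ∀ w ∈ s, a - 1 ≤ w.re := by
    simp only [s, Finset.mem_image, forall_exists_index, and_imp, forall_apply_eq_imp_iff₂]
    intro z hz
    have := (Complex.re_le_norm z).trans_eq ((hroot hz).norm'_eq_one hk)
    simp only [Complex.sub_re, Complex.ofReal_re]
    linarith
  obtain ⟨r, hr, hbound⟩ := exists_map_eq_prod_X_add_C (by linarith) s hconj hre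
  have hcard : s.card = k.totient := by
    rw [Finset.card_image_of_injective _ (sub_right_injective), hprim.card_primitiveRoots]
  suffices (cyclotomic k ℝ).comp (X + C a) = r by rwa [this, ← hcard]
  apply map_injective (algebraMap ℝ ℂ) Complex.ofReal_injective
  rw [hr, Polynomial.map_comp, map_cyclotomic, cyclotomic_eq_prod_X_sub_primitiveRoots hprim,
    prod_comp, Finset.prod_image (fun _ _ _ _ h => sub_right_injective h)]
  refine Finset.prod_congr rfl fun z _ => ?_
  simp only [Polynomial.map_add, map_X, map_C, Complex.coe_algebraMap, sub_comp, X_comp, C_comp,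
    C_sub]
  ring

/-- For `k > 2` and `m ≥ φ(k) + 1`, writing `Φ_k(m+X) = Σ_{d=0}^{φ(k)} p_d X^d`,
the coefficients satisfy `0 < p_{φ(k)-1} ≤ p_{φ(k)-2} ≤ ⋯ ≤ p₁ ≤ p₀` and `p₀ ≥ 2`. -/
theorem cyclotomic_shift_coeffs_monotone (k m : ℕ) (hk : 2 < k)
    (hm : Nat.totient k + 1 ≤ m) :
    0 < ((cyclotomic k ℤ).comp (X + C (m : ℤ))).coeff (Nat.totient k - 1) ∧
      (∀ d : ℕ, 1 ≤ d → d ≤ Nat.totient k - 1 →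
        ((cyclotomic k ℤ).comp (X + C (m : ℤ))).coeff d ≤
          ((cyclotomic k ℤ).comp (X + C (m : ℤ))).coeff (d - 1)) ∧
      2 ≤ ((cyclotomic k ℤ).comp (X + C (m : ℤ))).coeff 0 := by
  set n := k.totient
  set p := (cyclotomic k ℤ).comp (X + C (m : ℤ))
  have hn : 2 ≤ n := by
    obtain ⟨t, ht⟩ := Nat.totient_even hk
    have := Nat.totient_pos.mpr (by omega : 0 < k)
    omega
  have hmR : (n : ℝ) + 1 ≤ m := by exact_mod_cast hm
  have hbound : CoeffRatioBound (m - 1) n (p.map (Int.castRingHom ℝ)) := by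
    have := coeffRatioBound_cyclotomic_comp_X_add_C (k := k) (a := m) (by omega) (by linarith)
    rwa [Polynomial.map_comp, map_cyclotomic, Polynomial.map_add, map_X, map_C, eq_intCast,
      Int.cast_natCast]
  have hlead : p.coeff n = 1 := by
    have hdeg : p.natDegree = n := by
      rw [natDegree_comp, natDegree_cyclotomic, natDegree_X_add_C, mul_one]
    exact hdeg ▸ ((cyclotomic.monic k ℤ).comp_X_add_C (m : ℤ)).coeff_natDegree
  have hanti {i j : ℕ} (hij : i ≤ j) (hj : j ≤ n) : p.coeff j ≤ p.coeff i := by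
    have := hbound.antitoneOn (by linarith) (hij.trans hj) hj hij
    rwa [coeff_map, coeff_map, eq_intCast, eq_intCast, Int.cast_le] at this
  have htop : 2 ≤ p.coeff (n - 1) := by
    have hsub := hbound.mul_coeff_le_coeff_sub_one (by omega)
    rw [coeff_map, coeff_map, hlead, map_one, mul_one, eq_intCast] at hsub
    have : (2 : ℝ) ≤ n := by exact_mod_cast hn
    exact_mod_cast (show (2 : ℝ) ≤ n * (m - 1) by nlinarith).trans hsub
  exact ⟨by omega, fun d _ hd => hanti (Nat.sub_le d 1) (by omega),
    htop.trans (hanti (Nat.zero_le _) (Nat.sub_le n 1))⟩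
end

section
/- The Diophantine equation X² + 1 = Y^q has no solutions in integers X, Y ≥ 2 and q ≥ 2. -/
/-!
For even `q` the equation makes `X² + 1` a perfect square. For odd `q` we follow Lebesgue.
Parity forces `X` even, so `1 + Xi` and `1 - Xi` are coprime in `ℤ[i]`; their product is a
`q`-th power and every unit `u` of `ℤ[i]` satisfies `u ^ 4 = 1`, hence is a `q`-th power, so
`1 + Xi = w ^ q`. Since `q` is odd, `Re w ∣ Re (w ^ q) = 1`, so `w = ±(1 + ai)` and
`Re ((1 + ai) ^ q) = ±1`, where `a` is even and nonzero by comparing norms. But expanding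
binomially, `Re ((1 + ai) ^ q) ≡ 1 - C(q,2) a² (mod 2 ^ (v + 1) a²)` with `2 ^ v ∥ C(q,2)`,
which excludes both `1` and `-1`.
-/

open Finset Zsqrtd

local notation "ℤ[i]" => GaussianInt

namespace Nat

lemma factorization_choose_two_le {k : ℕ} (hk : 3 ≤ k) :
    (k.choose 2).factorization 2 ≤ k - 3 := by
  obtain ⟨m, rfl | rfl⟩ := Nat.even_or_odd' k
  · have hC : (2 * m).choose 2 = m * (2 * m - 1) := by
      rw [Nat.choose_two_right, mul_assoc, Nat.mul_div_cancel_left _ two_pos]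
    have hodd : (2 * m - 1).factorization 2 = 0 :=
      Nat.factorization_eq_zero_of_not_dvd (by omega)
    have hm := Nat.factorization_lt 2 (show m ≠ 0 by omega)
    rw [hC, Nat.factorization_mul (by omega) (by omega), Finsupp.add_apply, hodd]
    omega
  · have hC : (2 * m + 1).choose 2 = m * (2 * m + 1) := by
      rw [Nat.choose_two_right, Nat.add_sub_cancel, mul_comm, mul_assoc,
        Nat.mul_div_cancel_left _ two_pos]
    have hodd : (2 * m + 1).factorization 2 = 0 :=
      Nat.factorization_eq_zero_of_not_dvd (by omega)
    have hm := Nat.factorization_lt 2 (show m ≠ 0 by omega)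
    rw [hC, Nat.factorization_mul (by omega) (by omega), Finsupp.add_apply, hodd]
    omega

lemma two_pow_factorization_choose_two_dvd {q k : ℕ} (hk : 3 ≤ k) :
    2 ^ (q.choose 2).factorization 2 ∣ q.choose k * 2 ^ (k - 3) := by
  rcases Nat.eq_zero_or_pos (q.choose k) with h0 | hpos
  · simp [h0]
  have hk2 : k.choose 2 ≠ 0 := (Nat.choose_pos (by omega)).ne'
  have hdvd : ordProj[2] (q.choose 2) ∣ ordProj[2] (q.choose k * k.choose 2) :=
    Nat.ordProj_dvd_ordProj_of_dvd (mul_ne_zero hpos.ne' hk2) ⟨_, Nat.choose_mul (by omega)⟩ 2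
  rw [Nat.ordProj_mul 2 hpos.ne' hk2] at hdvd
  exact hdvd.trans (Nat.mul_dvd_mul (Nat.ordProj_dvd _ _)
    (Nat.pow_dvd_pow 2 (factorization_choose_two_le hk)))

end Nat

lemma two_pow_mul_sq_dvd_one_add_two_mul_pow_sub {R : Type*} [CommRing R] (y : R) {q : ℕ}
    (hq : 2 ≤ q) :
    2 ^ ((q.choose 2).factorization 2 + 1) * (2 * y) ^ 2 ∣
      (1 + 2 * y) ^ q - (1 + q * (2 * y) + q.choose 2 * (2 * y) ^ 2) := by
  have hlow : ∑ k ∈ range 3, (2 * y) ^ k * 1 ^ (q - k) * (q.choose k : R) =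
      1 + q * (2 * y) + q.choose 2 * (2 * y) ^ 2 := by
    simp only [one_pow, mul_one, sum_range_succ, range_one, sum_singleton, pow_zero,
      Nat.choose_zero_right, Nat.cast_one, pow_one, Nat.choose_one_right]
    ring
  rw [add_comm 1, add_pow, ← sum_range_add_sum_Ico _ (by omega : 3 ≤ q + 1), hlow,
    add_sub_cancel_left]
  refine dvd_sum fun k hk => ?_
  obtain ⟨j, rfl⟩ : ∃ j, k = j + 3 := ⟨k - 3, by have := (mem_Ico.mp hk).1; omega⟩
  have hchoose :
      ((2 ^ (q.choose 2).factorization 2 : ℕ) : R) ∣ (q.choose (j + 3) * 2 ^ j : ℕ) := by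
    have h := Nat.two_pow_factorization_choose_two_dvd (q := q) (k := j + 3) (by omega)
    exact Nat.cast_dvd_cast (by simpa using h)
  push_cast at hchoose
  calc 2 ^ ((q.choose 2).factorization 2 + 1) * (2 * y) ^ 2
      = (2 * y) ^ 2 * 2 * 2 ^ (q.choose 2).factorization 2 := by ring
    _ ∣ (2 * y) ^ 2 * 2 * (q.choose (j + 3) * 2 ^ j) := mul_dvd_mul_left _ hchoose
    _ ∣ (2 * y) ^ (j + 3) * 1 ^ (q - (j + 3)) * (q.choose (j + 3) : R) :=
      ⟨y ^ (j + 1), by ring⟩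

lemma exists_pow_eq_of_associated_pow {M : Type*} [CommMonoid M]
    (hM : ∀ u : M, IsUnit u → u ^ 4 = 1) {q : ℕ} (hq : Odd q) {d z : M}
    (h : Associated (d ^ q) z) : ∃ w, w ^ q = z := by
  obtain ⟨u, rfl⟩ := h
  obtain ⟨m, rfl⟩ := hq
  refine ⟨u ^ (2 * m + 1) * d, ?_⟩
  rw [mul_pow, ← pow_mul, show (2 * m + 1) * (2 * m + 1) = 4 * (m * m + m) + 1 by ring,
    pow_succ, pow_mul, hM u u.isUnit, one_pow, one_mul, mul_comm]

lemma Zsqrtd.re_dvd_re_pow {d : ℤ} (z : ℤ√d) {n : ℕ} (hn : Odd n) :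
    z.re ∣ (z ^ n).re := by
  have hsum : ∀ w : ℤ√d, w + star w = ((2 * w.re : ℤ) : ℤ√d) := fun w => by
    ext <;> simp [two_mul]
  have h := Odd.add_dvd_pow_add_pow z (star z) hn
  rw [← star_pow, hsum, hsum, intCast_dvd_intCast] at h
  exact Int.dvd_of_mul_dvd_mul_left two_ne_zero h

namespace GaussianInt

lemma pow_four_eq_one_of_isUnit {z : ℤ[i]} (hz : IsUnit z) : z ^ 4 = 1 := by
  have hnorm := (norm_eq_one_iff' (by norm_num) z).mpr hz
  obtain ⟨r, s⟩ := z
  rw [norm_def] at hnorm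
  dsimp only at hnorm
  have hrs : r * s = 0 := by
    obtain ⟨hr1, hr2⟩ : -1 ≤ r ∧ r ≤ 1 := by constructor <;> nlinarith [sq_nonneg s]
    interval_cases r <;> nlinarith
  ext <;> simp only [pow_succ, pow_zero, one_mul, re_mul, im_mul, re_one, im_one]
  · linear_combination (r * r + s * s + 1) * hnorm - 8 * r * s * hrs
  · linear_combination 4 * (r * r - s * s) * hrs

lemma isCoprime_one_add_of_even {X : ℤ} (hX : Even X) :
    IsCoprime (⟨1, X⟩ : ℤ[i]) ⟨1, -X⟩ := by
  obtain ⟨c, rfl⟩ := hX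
  exact ⟨⟨0, c⟩, ⟨1, c⟩, by ext <;> simp; ring⟩

lemma re_pow_modEq {c : ℤ} (q : ℕ) (hq : 2 ≤ q) :
    ((⟨1, 2 * c⟩ : ℤ[i]) ^ q).re ≡ 1 - q.choose 2 * (2 * c) ^ 2
      [ZMOD 2 ^ ((q.choose 2).factorization 2 + 1) * (2 * c) ^ 2] := by
  have h := two_pow_mul_sq_dvd_one_add_two_mul_pow_sub ((c : ℤ[i]) * sqrtd) hq
  have h1 : 1 + 2 * ((c : ℤ[i]) * sqrtd) = ⟨1, 2 * c⟩ := by ext <;> simp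
  have h2 : (2 ^ ((q.choose 2).factorization 2 + 1) * (2 * ((c : ℤ[i]) * sqrtd)) ^ 2) =
      ((-(2 ^ ((q.choose 2).factorization 2 + 1) * (2 * c) ^ 2) : ℤ) : ℤ[i]) := by
    ext <;> simp [sq]
  rw [h1, h2, intCast_dvd, neg_dvd] at h
  exact (Int.modEq_iff_dvd.mpr (by simpa [sq, sub_eq_add_neg] using h.1)).symm

lemma not_isUnit_re_pow {a : ℤ} (ha : Even a) (ha0 : a ≠ 0) {q : ℕ} (hq : 2 ≤ q) :
    ¬ IsUnit ((⟨1, a⟩ : ℤ[i]) ^ q).re := by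
  obtain ⟨c, rfl⟩ := ha.two_dvd
  have hcongr := (re_pow_modEq q hq (c := c)).symm.dvd
  intro hunit
  rcases Int.isUnit_iff.mp hunit with h | h <;> rw [h] at hcongr
  · rw [sub_sub_cancel] at hcongr
    have : (2 : ℤ) ^ ((q.choose 2).factorization 2 + 1) ∣ q.choose 2 :=
      Int.dvd_of_mul_dvd_mul_right (pow_ne_zero _ ha0) hcongr
    exact Nat.pow_succ_factorization_not_dvd (Nat.choose_pos hq).ne' Nat.prime_two
      (by exact_mod_cast this)
  · have h4 : (4 : ℤ) ∣ 2 ^ ((q.choose 2).factorization 2 + 1) * (2 * c) ^ 2 :=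
      Dvd.dvd.mul_left ⟨c ^ 2, by ring⟩ _
    have := dvd_sub (h4.trans hcongr)
      (⟨q.choose 2 * c ^ 2, by ring⟩ : (4 : ℤ) ∣ q.choose 2 * (2 * c) ^ 2)
    ring_nf at this
    norm_num at this

lemma exists_pow_eq_one_add_of_sq_add_one_eq_pow {X Y : ℤ} (hX : Even X) {q : ℕ} (hq : Odd q)
    (h : X ^ 2 + 1 = Y ^ q) : ∃ w : ℤ[i], w ^ q = ⟨1, X⟩ := by
  have hfactor : (⟨1, X⟩ : ℤ[i]) * ⟨1, -X⟩ = (Y : ℤ[i]) ^ q := by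
    rw [← Int.cast_pow, ← h]
    ext <;> simp [sq, add_comm]
  obtain ⟨d, hd⟩ := exists_associated_pow_of_mul_eq_pow' (isCoprime_one_add_of_even hX) hfactor
  exact exists_pow_eq_of_associated_pow (fun _ => pow_four_eq_one_of_isUnit) hq hd

lemma pow_ne_one_add_of_even {X : ℤ} (hX : Even X) (hX0 : X ≠ 0) {q : ℕ} (hq : Odd q)
    (hq1 : 1 < q) (w : ℤ[i]) : w ^ q ≠ ⟨1, X⟩ := by
  intro hw
  have hre : IsUnit w.re := isUnit_of_dvd_one (by simpa [hw] using w.re_dvd_re_pow hq)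
  have hunit : IsUnit ((⟨1, w.re * w.im⟩ : ℤ[i]) ^ q).re := by
    have hrot : w = (w.re : ℤ[i]) * ⟨1, w.re * w.im⟩ := by
      ext <;> simp [← mul_assoc, Int.isUnit_mul_self hre]
    have h1 := congrArg Zsqrtd.re hw
    rw [hrot, mul_pow, ← Int.cast_pow, re_smul] at h1
    exact IsUnit.of_mul_eq_one_right _ h1
  have hnorm : (1 + w.im ^ 2) ^ q = 1 + X ^ 2 := by
    have h1 : w.norm ^ q = (⟨1, X⟩ : ℤ[i]).norm := by
      rw [← hw]
      exact (map_pow normMonoidHom w q).symm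
    rw [norm_def, norm_def, Int.isUnit_mul_self hre] at h1
    simpa [sq] using h1
  have him : Even w.im := by
    have hodd : Odd ((1 + w.im ^ 2) ^ q) := by
      rw [hnorm]
      simpa [parity_simps] using hX
    simpa [parity_simps, hq.pos.ne'] using hodd
  have him0 : w.im ≠ 0 := by
    rintro h0
    rw [h0] at hnorm
    exact hX0 (by simpa using hnorm)
  exact not_isUnit_re_pow (him.mul_left _) (mul_ne_zero hre.ne_zero him0) hq1 hunit

end GaussianInt

namespace Int

lemma sq_add_one_ne_sq {X : ℤ} (hX : X ≠ 0) (Z : ℤ) : X ^ 2 + 1 ≠ Z ^ 2 := by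
  intro h
  have hlt : |X| < |Z| := sq_lt_sq.mp (by omega)
  nlinarith [sq_abs X, sq_abs Z, abs_pos.mpr hX]

lemma even_of_sq_add_one_eq_pow {X Y : ℤ} {q : ℕ} (hq : 2 ≤ q) (h : X ^ 2 + 1 = Y ^ q) :
    Even X := by
  rcases Int.even_or_odd Y with hY | hY
  · exfalso
    have h4 : (4 : ℤ) ∣ X ^ 2 + 1 :=
      h ▸ (pow_dvd_pow 2 hq).trans (pow_dvd_pow_of_dvd hY.two_dvd q)
    have h4' := (ZMod.intCast_zmod_eq_zero_iff_dvd _ 4).mpr h4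
    push_cast at h4'
    generalize (X : ZMod 4) = x at h4'
    revert x
    decide
  · have hodd := hY.pow (n := q)
    rw [← h] at hodd
    simpa [parity_simps] using hodd

lemma sq_add_one_ne_pow_of_odd {X : ℤ} (hX : X ≠ 0) (Y : ℤ) {q : ℕ} (hq : Odd q)
    (hq1 : 1 < q) : X ^ 2 + 1 ≠ Y ^ q := by
  intro h
  have hXeven := even_of_sq_add_one_eq_pow hq1 h
  obtain ⟨w, hw⟩ := GaussianInt.exists_pow_eq_one_add_of_sq_add_one_eq_pow hXeven hq h
  exact GaussianInt.pow_ne_one_add_of_even hXeven hX hq hq1 w hw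

end Int

theorem no_solution_sq_add_one_eq_pow_general (X Y : ℤ) (q : ℕ) (hX : 2 ≤ X)
    (hq : 2 ≤ q) : X ^ 2 + 1 ≠ Y ^ q := by
  have hX0 : X ≠ 0 := by omega
  rcases Nat.even_or_odd q with ⟨m, rfl⟩ | hodd
  · simpa [← two_mul, pow_mul'] using Int.sq_add_one_ne_sq hX0 (Y ^ m)
  · exact Int.sq_add_one_ne_pow_of_odd hX0 Y hodd (by omega)

/-- The Diophantine equation `X² + 1 = Y^q` has no solutions with
`X, Y ≥ 2` and `q ≥ 2`. -/
theorem no_solution_sq_add_one_eq_pow (X Y : ℤ) (q : ℕ) (hX : 2 ≤ X) (hY : 2 ≤ Y)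
    (hq : 2 ≤ q) : X ^ 2 + 1 ≠ Y ^ q :=
  no_solution_sq_add_one_eq_pow_general X Y q hX hq
end

section
/- Let k ∈ {17, 19, 23} be prime and n ≥ 2 an integer. There is no integer m and no 0 ≤ j ≤ k-1 such that ζ^j·(-m + ζ) = (-n + ζ)^k, where ζ is a primitive k-th root of unity. -/
/-!
The relation says that ζ is a root of a rational polynomial, so it holds for every primitive
`k`-th root of unity `ζ'`; taking absolute values, `‖ζ' - m‖ = ‖ζ' - n‖ ^ k` for all of them.
For odd `k ≥ 5` there are two such roots `u`, `v` with `re u - re v > 1 / 2`. Then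
`‖v - n‖ ^ k - ‖u - n‖ ^ k ≥ ‖v - n‖ ^ 2 - ‖u - n‖ ^ 2 = 2 n (re u - re v) > 2`,
whereas `‖v - m‖ - ‖u - m‖ ≤ ‖v - u‖ ≤ 2`.
-/

open Polynomial Complex

theorem IsPrimitiveRoot.aeval_eq_zero_of_aeval_eq_zero {K : Type*} [Field K] [CharZero K]
    {k : ℕ} (hk : 0 < k) {ζ ζ' : K} (hζ : IsPrimitiveRoot ζ k) (hζ' : IsPrimitiveRoot ζ' k)
    {p : ℚ[X]} (hp : aeval ζ p = 0) : aeval ζ' p = 0 := by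
  have hdvd : cyclotomic k ℚ ∣ p := cyclotomic_eq_minpoly_rat hζ hk ▸ minpoly.dvd ℚ ζ hp
  refine aeval_eq_zero_of_dvd_aeval_eq_zero hdvd ?_
  rw [aeval_def, ← eval_map, map_cyclotomic]
  exact hζ'.isRoot_cyclotomic hk

theorem IsPrimitiveRoot.pow_mul_sub_eq_sub_pow {K : Type*} [Field K] [CharZero K]
    {k : ℕ} (hk : 0 < k) {ζ ζ' : K} (hζ : IsPrimitiveRoot ζ k) (hζ' : IsPrimitiveRoot ζ' k)
    {m n : ℚ} {j : ℕ} (h : ζ ^ j * (ζ - m) = (ζ - n) ^ k) :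
    ζ' ^ j * (ζ' - m) = (ζ' - n) ^ k := by
  have aeval_eq (x : K) : aeval x (X ^ j * (X - C m) - (X - C n) ^ k) =
      x ^ j * (x - m) - (x - n) ^ k := by
    simp
  rw [← sub_eq_zero, ← aeval_eq] at h ⊢
  exact hζ.aeval_eq_zero_of_aeval_eq_zero hk hζ' h

theorem Complex.sq_norm_sub_ofReal {z : ℂ} (hz : ‖z‖ = 1) (x : ℝ) :
    ‖z - x‖ ^ 2 = x ^ 2 - 2 * x * z.re + 1 := by
  have h := Complex.sq_norm_sub_sq_re z
  rw [hz] at h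
  rw [Complex.sq_norm, Complex.normSq_apply]
  simp only [sub_re, ofReal_re, sub_im, ofReal_im, sub_zero]
  nlinarith

theorem sq_sub_sq_le_pow_sub_pow {R : Type*} [CommRing R] [LinearOrder R] [IsStrictOrderedRing R]
    {a b : R} (ha : 1 ≤ a) (hab : a ≤ b) {k : ℕ} (hk : 2 ≤ k) :
    b ^ 2 - a ^ 2 ≤ b ^ k - a ^ k := by
  obtain ⟨i, rfl⟩ := Nat.exists_eq_add_of_le hk
  have h1 : 1 ≤ a ^ i := one_le_pow₀ ha
  have h2 : a ^ i ≤ b ^ i := pow_le_pow_left₀ (by linarith) hab i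
  have h3 : a ^ 2 ≤ b ^ 2 := pow_le_pow_left₀ (by linarith) hab 2
  rw [pow_add, pow_add]
  nlinarith

theorem norm_eq_norm_pow_of_pow_mul_eq {E : Type*} [NormedDivisionRing E] {u w z : E}
    (hu : ‖u‖ = 1) {j k : ℕ} (h : u ^ j * w = z ^ k) : ‖w‖ = ‖z‖ ^ k := by
  simpa [norm_pow, hu] using congrArg norm h

theorem false_of_pow_mul_sub_eq_sub_pow_of_re_sub_re {u v m : ℂ} {n : ℝ} {j k : ℕ}
    (hu : ‖u‖ = 1) (hv : ‖v‖ = 1) (hre : 1 / 2 < u.re - v.re) (hn : 2 ≤ n) (hk : 2 ≤ k)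
    (hu_eq : u ^ j * (u - m) = (u - n) ^ k) (hv_eq : v ^ j * (v - m) = (v - n) ^ k) : False := by
  set A := ‖u - n‖
  set B := ‖v - n‖
  have hA : 1 ≤ A := by
    have := norm_sub_norm_le (n : ℂ) u
    rw [norm_sub_rev, hu, Complex.norm_real, Real.norm_of_nonneg (by linarith)] at this
    linarith
  have hBA : 2 < B ^ 2 - A ^ 2 := by
    rw [sq_norm_sub_ofReal hu, sq_norm_sub_ofReal hv]
    nlinarith
  have hAB : A ≤ B := by nlinarith [norm_nonneg (v - n)]
  have hclose : B ^ k ≤ A ^ k + 2 :=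
    calc B ^ k = ‖(u - m) + (v - u)‖ := by
          rw [← norm_eq_norm_pow_of_pow_mul_eq hv hv_eq]; ring_nf
      _ ≤ ‖u - m‖ + (‖v‖ + ‖u‖) := norm_add_le_of_le le_rfl (norm_sub_le v u)
      _ = A ^ k + 2 := by rw [norm_eq_norm_pow_of_pow_mul_eq hu hu_eq, hu, hv, one_add_one_eq_two]
  linarith [sq_sub_sq_le_pow_sub_pow hA hAB hk]

theorem Complex.re_exp_two_pi_mul_I_div (i n : ℕ) :
    (exp (2 * Real.pi * I * (i / n))).re = Real.cos (2 * Real.pi * i / n) := by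
  rw [← exp_ofReal_mul_I_re]
  congr 2
  push_cast
  ring

theorem Complex.exists_isPrimitiveRoot_re_sub_re_gt {k : ℕ} (hk : 5 ≤ k) (hodd : Odd k) :
    ∃ u v : ℂ, IsPrimitiveRoot u k ∧ IsPrimitiveRoot v k ∧ 1 / 2 < u.re - v.re := by
  obtain ⟨r, rfl⟩ := hodd
  refine ⟨_, _, isPrimitiveRoot_exp_of_coprime 1 _ (by omega) (Nat.coprime_one_left _),
    isPrimitiveRoot_exp_of_coprime r _ (by omega) (by simp), ?_⟩
  rw [re_exp_two_pi_mul_I_div, re_exp_two_pi_mul_I_div]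
  set θ := Real.pi / (2 * r + 1 : ℕ)
  have hθ : 0 < θ := by positivity
  have hθ5 : θ * 5 ≤ Real.pi := by
    rw [div_mul_eq_mul_div, div_le_iff₀ (by positivity)]
    have : (5 : ℝ) ≤ (2 * r + 1 : ℕ) := by exact_mod_cast hk
    nlinarith [Real.pi_pos]
  have hu : 2 * Real.pi * (1 : ℕ) / (2 * r + 1 : ℕ) = 2 * θ := by simp [θ]; ring
  have hv : 2 * Real.pi * (r : ℕ) / (2 * r + 1 : ℕ) = Real.pi - θ := by
    simp only [θ]; field_simp; push_cast; ring
  rw [hu, hv, Real.cos_pi_sub]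
  have h2θ : 0 < Real.cos (2 * θ) := Real.cos_pos_of_mem_Ioo ⟨by linarith, by linarith⟩
  have hθ3 : 1 / 2 ≤ Real.cos θ := by
    rw [← Real.cos_pi_div_three]
    exact Real.cos_le_cos_of_nonneg_of_le_pi hθ.le (by linarith) (by linarith)
  linarith

theorem IsPrimitiveRoot.pow_mul_sub_ne_sub_pow {k : ℕ} (hk : 5 ≤ k) (hodd : Odd k) {ζ : ℂ}
    (hζ : IsPrimitiveRoot ζ k) (j : ℕ) (m : ℚ) {n : ℚ} (hn : 2 ≤ n) :
    ζ ^ j * (ζ - m) ≠ (ζ - n) ^ k := by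
  intro h
  obtain ⟨u, v, hu, hv, hre⟩ := exists_isPrimitiveRoot_re_sub_re_gt hk hodd
  have transfer {ζ' : ℂ} (hζ' : IsPrimitiveRoot ζ' k) : ζ' ^ j * (ζ' - m) = (ζ' - (n : ℝ)) ^ k := by
    rw [ofReal_ratCast]
    exact hζ.pow_mul_sub_eq_sub_pow (by omega) hζ' h
  exact false_of_pow_mul_sub_eq_sub_pow_of_re_sub_re (hu.norm'_eq_one (by omega))
    (hv.norm'_eq_one (by omega)) hre (by exact_mod_cast hn) (by omega) (transfer hu) (transfer hv)

/-- For `k ∈ {17, 19, 23}` and an integer `n ≥ 2`, there is no integer `m` and no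
`0 ≤ j ≤ k - 1` with `ζ^j (-m + ζ) = (-n + ζ)^k`, `ζ` a primitive `k`-th root of unity. -/
theorem no_unit_twisted_linear_eq_kth_power (k : ℕ) (hk : k = 17 ∨ k = 19 ∨ k = 23)
    (ζ : ℂ) (hζ : IsPrimitiveRoot ζ k) (n : ℤ) (hn : 2 ≤ n) :
    ¬ ∃ (m : ℤ) (j : ℕ), j ≤ k - 1 ∧ ζ ^ j * (-(m : ℂ) + ζ) = (-(n : ℂ) + ζ) ^ k := by
  rintro ⟨m, j, -, h⟩
  have hodd : Odd k := by rcases hk with rfl | rfl | rfl <;> decide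
  refine hζ.pow_mul_sub_ne_sub_pow (by omega) hodd j m (n := n) (by exact_mod_cast hn) ?_
  simpa [neg_add_eq_sub] using h
end

section
/- For k prime and any integer n, the gcd in ℤ[n] of the polynomials p_{k,3}(n) = (-n)^{k-3}·C(k,3) + kn and p_{k,4}(n) = (-n)^{k-4}·C(k,4) + kn equals kn for k ∈ {17, 19, 23}; consequently, p_{k,3}(n) = p_{k,4}(n) = 0 forces n = 0. -/
open Polynomial

private lemma gcd_aux (c d NN : ℤ) (mp : ℕ)
    (hN : NN = c ^ (mp) + (-d) ^ (mp + 1)) (hN0 : NN ≠ 0) (g : ℤ[X]) (D : ℤ[X])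
    (h1 : D ∣ g * (C c * X ^ (mp + 1) + 1)) (h2 : D ∣ g * (1 - C d * X ^ mp)) :
    D ∣ g := by
  set u : ℤ[X] := C c * X ^ (mp + 1) + 1 with hu_def
  set v : ℤ[X] := 1 - C d * X ^ mp with hv_def
  have key : ∀ e : ℤ[X], e ∣ u → e ∣ v → IsUnit e := by
    intro e hu hv
    have hL : e ∣ C c * X + C d := by
      have : C d * u + (C c * X) * v = C c * X + C d := by
        rw [hu_def, hv_def]; ring
      rw [← this]
      exact dvd_add (hu.mul_left _) (hv.mul_left _)
    have hpow : (C c * X + C d) ∣ (C c * X) ^ (mp + 1) - (- C d) ^ (mp + 1) := by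
      have := sub_dvd_pow_sub_pow (C c * X) (- C d) (mp + 1)
      simpa using this
    have hdiff : e ∣ (C c * X) ^ (mp + 1) - (- C d) ^ (mp + 1) := hL.trans hpow
    have hNdvd : e ∣ C NN := by
      have hrw : C NN = C (c ^ mp) * u - ((C c * X) ^ (mp + 1) - (- C d) ^ (mp + 1)) := by
        rw [hN, hu_def]
        simp only [C_add, C_mul, C_pow, C_neg]
        ring
      rw [hrw]
      exact dvd_sub ((hu).mul_left _) hdiff
    have hdeg : e.natDegree = 0 := by
      have h0 : (C NN : ℤ[X]) ≠ 0 := by simpa using hN0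
      have := Polynomial.natDegree_le_of_dvd hNdvd h0
      simpa using this
    obtain ⟨a, rfl⟩ : ∃ a : ℤ, e = C a := ⟨e.coeff 0, (Polynomial.eq_C_of_natDegree_eq_zero hdeg)⟩
    have ha : a ∣ u.coeff 0 := (C_dvd_iff_dvd_coeff a u).mp hu 0
    have hc0 : u.coeff 0 = 1 := by
      rw [hu_def]
      simp
    rw [hc0] at ha
    exact (isUnit_C).mpr (isUnit_of_dvd_one ha)
  have hD : D ∣ gcd (g * u) (g * v) := dvd_gcd h1 h2
  rw [gcd_mul_left] at hD
  have hunit : IsUnit (gcd u v) := key _ (gcd_dvd_left u v) (gcd_dvd_right u v)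
  have hassoc : Associated (normalize g * gcd u v) g :=
    (associated_mul_unit_left (normalize g) _ hunit).trans (normalize_associated g)
  exact hD.trans hassoc.dvd

/-- For `k ∈ {17, 19, 23}`, the gcd in `ℤ[n]` of
`p_{k,3}(n) = (-n)^{k-3} C(k,3) + kn` and `p_{k,4}(n) = (-n)^{k-4} C(k,4) + kn`
equals `kn`: `kn` divides both, every common divisor divides `kn`, and
consequently `p_{k,3}(n) = p_{k,4}(n) = 0` forces `n = 0`. -/
theorem gcd_coeff_polys_three_four (k : ℕ) (hk : k = 17 ∨ k = 19 ∨ k = 23) :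
    (C (k : ℤ) * X ∣ (-X) ^ (k - 3) * C (Nat.choose k 3 : ℤ) + C (k : ℤ) * X ∧
      C (k : ℤ) * X ∣ (-X) ^ (k - 4) * C (Nat.choose k 4 : ℤ) + C (k : ℤ) * X ∧
      ∀ D : ℤ[X], D ∣ (-X) ^ (k - 3) * C (Nat.choose k 3 : ℤ) + C (k : ℤ) * X →
        D ∣ (-X) ^ (k - 4) * C (Nat.choose k 4 : ℤ) + C (k : ℤ) * X →
          D ∣ C (k : ℤ) * X) ∧
    ∀ n : ℤ, ((-X) ^ (k - 3) * C (Nat.choose k 3 : ℤ) + C (k : ℤ) * X).eval n = 0 →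
      ((-X) ^ (k - 4) * C (Nat.choose k 4 : ℤ) + C (k : ℤ) * X).eval n = 0 → n = 0 := by
  rcases hk with rfl | rfl | rfl
  · have h3 : (-X : ℤ[X]) ^ (17 - 3) * C ((Nat.choose 17 3 : ℕ) : ℤ) + C ((17:ℕ) : ℤ) * X
        = (C ((17:ℕ):ℤ) * X) * (C 40 * X ^ (12 + 1) + 1) := by
      norm_num [show Nat.choose 17 3 = 680 from by decide, show ((680:ℕ):ℤ) = 17 * 40 by norm_num, C_mul]
      ring
    have h4 : (-X : ℤ[X]) ^ (17 - 4) * C ((Nat.choose 17 4 : ℕ) : ℤ) + C ((17:ℕ) : ℤ) * X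
        = (C ((17:ℕ):ℤ) * X) * (1 - C 140 * X ^ 12) := by
      norm_num [show Nat.choose 17 4 = 2380 from by decide, show ((2380:ℕ):ℤ) = 17 * 140 by norm_num, C_mul]
      ring
    refine ⟨⟨⟨_, h3⟩, ⟨_, h4⟩, fun D hD3 hD4 => ?_⟩, fun n h3' h4' => ?_⟩
    · rw [h3] at hD3; rw [h4] at hD4
      exact gcd_aux 40 140 (40 ^ 12 + (-140) ^ 13) 12 rfl (by norm_num) _ D hD3 hD4
    · simp only [eval_add, eval_mul, eval_pow, eval_neg, eval_C, eval_X] at h3'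
      norm_num [show Nat.choose 17 3 = 680 from by decide] at h3'
      have hfac : n * (680 * n ^ 13 + 17) = 0 := by linear_combination h3'
      rcases mul_eq_zero.mp hfac with h | h
      · exact h
      · exfalso
        have h5 : (5:ℤ) ∣ 680 * n ^ 13 := ⟨136 * n ^ 13, by ring⟩
        have : (680:ℤ) * n ^ 13 = -17 := by linarith
        rw [this] at h5
        norm_num at h5
  · have h3 : (-X : ℤ[X]) ^ (19 - 3) * C ((Nat.choose 19 3 : ℕ) : ℤ) + C ((19:ℕ) : ℤ) * X
        = (C ((19:ℕ):ℤ) * X) * (C 51 * X ^ (14 + 1) + 1) := by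
      norm_num [show Nat.choose 19 3 = 969 from by decide, show ((969:ℕ):ℤ) = 19 * 51 by norm_num, C_mul]
      ring
    have h4 : (-X : ℤ[X]) ^ (19 - 4) * C ((Nat.choose 19 4 : ℕ) : ℤ) + C ((19:ℕ) : ℤ) * X
        = (C ((19:ℕ):ℤ) * X) * (1 - C 204 * X ^ 14) := by
      norm_num [show Nat.choose 19 4 = 3876 from by decide, show ((3876:ℕ):ℤ) = 19 * 204 by norm_num, C_mul]
      ring
    refine ⟨⟨⟨_, h3⟩, ⟨_, h4⟩, fun D hD3 hD4 => ?_⟩, fun n h3' h4' => ?_⟩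
    · rw [h3] at hD3; rw [h4] at hD4
      exact gcd_aux 51 204 (51 ^ 14 + (-204) ^ 15) 14 rfl (by norm_num) _ D hD3 hD4
    · simp only [eval_add, eval_mul, eval_pow, eval_neg, eval_C, eval_X] at h3'
      norm_num [show Nat.choose 19 3 = 969 from by decide] at h3'
      have hfac : n * (969 * n ^ 15 + 19) = 0 := by linear_combination h3'
      rcases mul_eq_zero.mp hfac with h | h
      · exact h
      · exfalso
        have h5 : (3:ℤ) ∣ 969 * n ^ 15 := ⟨323 * n ^ 15, by ring⟩
        have : (969:ℤ) * n ^ 15 = -19 := by linarith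
        rw [this] at h5
        norm_num at h5
  · have h3 : (-X : ℤ[X]) ^ (23 - 3) * C ((Nat.choose 23 3 : ℕ) : ℤ) + C ((23:ℕ) : ℤ) * X
        = (C ((23:ℕ):ℤ) * X) * (C 77 * X ^ (18 + 1) + 1) := by
      norm_num [show Nat.choose 23 3 = 1771 from by decide, show ((1771:ℕ):ℤ) = 23 * 77 by norm_num, C_mul]
      ring
    have h4 : (-X : ℤ[X]) ^ (23 - 4) * C ((Nat.choose 23 4 : ℕ) : ℤ) + C ((23:ℕ) : ℤ) * X
        = (C ((23:ℕ):ℤ) * X) * (1 - C 385 * X ^ 18) := by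
      norm_num [show Nat.choose 23 4 = 8855 from by decide, show ((8855:ℕ):ℤ) = 23 * 385 by norm_num, C_mul]
      ring
    refine ⟨⟨⟨_, h3⟩, ⟨_, h4⟩, fun D hD3 hD4 => ?_⟩, fun n h3' h4' => ?_⟩
    · rw [h3] at hD3; rw [h4] at hD4
      exact gcd_aux 77 385 (77 ^ 18 + (-385) ^ 19) 18 rfl (by norm_num) _ D hD3 hD4
    · simp only [eval_add, eval_mul, eval_pow, eval_neg, eval_C, eval_X] at h3'
      norm_num [show Nat.choose 23 3 = 1771 from by decide] at h3'
      have hfac : n * (1771 * n ^ 19 + 23) = 0 := by linear_combination h3'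
      rcases mul_eq_zero.mp hfac with h | h
      · exact h
      · exfalso
        have h5 : (7:ℤ) ∣ 1771 * n ^ 19 := ⟨253 * n ^ 19, by ring⟩
        have : (1771:ℤ) * n ^ 19 = -23 := by linarith
        rw [this] at h5
        norm_num at h5
end
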